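/- arXiv:1501.04972 — 4 statements merged into one kernel-verified Lean document; each statement's English description precedes it below -/
import Mathlib

section
/- For all m, m' > 0 and H ∈ (1/2, 1), we have H(2H-1) ∫₀^∞ ∫₀^∞ e^{-ms} e^{-m'r} |s-r|^{2H-2} dr ds = (H Γ(2H) / (m + m')) (m^{1-2H} + (m')^{1-2H}). -/
/-!
Split the quadrant along the diagonal. On `{r < s}` the substitution `s = r + u` factors the
integrand as `e^{-(m+m')r} · e^{-mu} u^{2H-2}`, so that half equals `Γ(2H-1) m^{1-2H} / (m+m')`;
the other half is the same with `m` and `m'` exchanged. Everything is computed for the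
`ℝ≥0∞`-valued integrals, where Tonelli needs no integrability, and `(2H-1) Γ(2H-1) = Γ(2H)`
finishes.
-/

open MeasureTheory Real Set

open scoped ENNReal

noncomputable def fbmKernel (a m m' s r : ℝ) : ℝ :=
  exp (-m * s) * exp (-m' * r) * |s - r| ^ a

lemma fbmKernel_comm (a m m' s r : ℝ) : fbmKernel a m m' s r = fbmKernel a m' m r s := by
  rw [fbmKernel, fbmKernel, mul_comm (exp _), abs_sub_comm]

lemma fbmKernel_nonneg (a m m' s r : ℝ) : 0 ≤ fbmKernel a m m' s r := by
  unfold fbmKernel; positivity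

lemma measurable_fbmKernel (a m m' : ℝ) : Measurable (Function.uncurry (fbmKernel a m m')) := by
  unfold fbmKernel Function.uncurry; fun_prop

lemma lintegral_exp_mul_rpow_Ioi {c a : ℝ} (hc : 0 < c) (ha : -1 < a) :
    ∫⁻ u in Ioi 0, ENNReal.ofReal (exp (-c * u) * u ^ a)
      = ENNReal.ofReal (Gamma (a + 1) * c ^ (-(a + 1))) := by
  have hint : IntegrableOn (fun u : ℝ => exp (-c * u) * u ^ a) (Ioi 0) := by
    simpa [mul_comm] using integrableOn_rpow_mul_exp_neg_mul_rpow ha one_pos hc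
  rw [← ofReal_integral_eq_lintegral_ofReal hint
    (ae_restrict_of_forall_mem measurableSet_Ioi fun u (hu : 0 < u) => by positivity)]
  congr 1
  have := integral_rpow_mul_exp_neg_mul_Ioi (a := a + 1) (by linarith) hc
  rw [add_sub_cancel_right, one_div, inv_rpow hc.le, ← rpow_neg hc.le] at this
  simpa [mul_comm] using this

lemma lintegral_exp_Ioi {c : ℝ} (hc : 0 < c) :
    ∫⁻ u in Ioi 0, ENNReal.ofReal (exp (-c * u)) = ENNReal.ofReal c⁻¹ := by
  simpa [rpow_neg_one] using lintegral_exp_mul_rpow_Ioi hc (a := 0) (by norm_num)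

lemma setLIntegral_Ioi_eq_comp_add (t : ℝ) (φ : ℝ → ℝ≥0∞) :
    ∫⁻ x in Ioi t, φ x = ∫⁻ u in Ioi 0, φ (u + t) := by
  have := (measurePreserving_add_right volume t).setLIntegral_comp_emb
    (MeasurableEquiv.addRight t).measurableEmbedding φ (Ioi 0)
  rwa [image_add_const_Ioi, zero_add, eq_comm] at this

lemma lintegral_Ioi_fbmKernel {a m : ℝ} (m' : ℝ) (hm : 0 < m) (ha : -1 < a) (r : ℝ) :
    ∫⁻ s in Ioi r, ENNReal.ofReal (fbmKernel a m m' s r)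
      = ENNReal.ofReal (exp (-(m + m') * r)) * ENNReal.ofReal (Gamma (a + 1) * m ^ (-(a + 1))) := by
  rw [setLIntegral_Ioi_eq_comp_add, ← lintegral_exp_mul_rpow_Ioi hm ha,
    ← lintegral_const_mul' _ _ ENNReal.ofReal_ne_top]
  refine setLIntegral_congr_fun measurableSet_Ioi fun u (hu : 0 < u) => ?_
  rw [← ENNReal.ofReal_mul (exp_pos _).le, fbmKernel, add_sub_cancel_right, abs_of_pos hu,
    show -m * (u + r) = -m * u + -m * r by ring, show -(m + m') * r = -m * r + -m' * r by ring,
    exp_add, exp_add]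
  ring_nf

lemma lintegral_Ioi_lintegral_Ioc_eq {μ : Measure ℝ} [SFinite μ] (t : ℝ) {f : ℝ → ℝ → ℝ≥0∞}
    (hf : Measurable (Function.uncurry f)) :
    ∫⁻ s in Ioi t, ∫⁻ r in Ioc t s, f s r ∂μ ∂μ = ∫⁻ r in Ioi t, ∫⁻ s in Ici r, f s r ∂μ ∂μ := by
  set T : Set (ℝ × ℝ) := {p | t < p.2 ∧ p.2 ≤ p.1}
  have hT : MeasurableSet T :=
    (measurableSet_lt measurable_const measurable_snd).inter
      (measurableSet_le measurable_snd measurable_fst)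
  have hg : Measurable (Function.uncurry fun s r => T.indicator (Function.uncurry f) (s, r)) :=
    hf.indicator hT
  calc ∫⁻ s in Ioi t, ∫⁻ r in Ioc t s, f s r ∂μ ∂μ
      = ∫⁻ s, ∫⁻ r, T.indicator (Function.uncurry f) (s, r) ∂μ ∂μ := by
        rw [← lintegral_indicator measurableSet_Ioi]
        refine lintegral_congr fun s => ?_
        by_cases hs : s ∈ Ioi t
        · rw [indicator_of_mem hs, ← lintegral_indicator measurableSet_Ioc]
          congr with r
        · rw [indicator_of_notMem hs]
          refine ((lintegral_congr fun r => indicator_of_notMem ?_ _).trans lintegral_zero).symm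
          exact fun h => hs (h.1.trans_le h.2)
    _ = ∫⁻ r, ∫⁻ s, T.indicator (Function.uncurry f) (s, r) ∂μ ∂μ :=
        lintegral_lintegral_swap hg.aemeasurable
    _ = ∫⁻ r in Ioi t, ∫⁻ s in Ici r, f s r ∂μ ∂μ := by
        rw [← lintegral_indicator measurableSet_Ioi]
        refine lintegral_congr fun r => ?_
        by_cases hr : r ∈ Ioi t
        · rw [indicator_of_mem hr, ← lintegral_indicator measurableSet_Ici]
          congr with s
          simp only [T, indicator_apply, mem_Ici, mem_ofPred_eq, Function.uncurry_apply_pair,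
            hr.out, true_and]
        · rw [indicator_of_notMem hr]
          exact (lintegral_congr fun s => indicator_of_notMem (fun h => hr h.1) _).trans
            lintegral_zero

lemma lintegral_lintegral_fbmKernel {a m m' : ℝ} (hm : 0 < m) (hm' : 0 < m') (ha : -1 < a) :
    ∫⁻ s in Ioi 0, ∫⁻ r in Ioi 0, ENNReal.ofReal (fbmKernel a m m' s r)
      = ENNReal.ofReal (Gamma (a + 1) * (m ^ (-(a + 1)) + m' ^ (-(a + 1))) / (m + m')) := by
  set K : ℝ → ℝ → ℝ≥0∞ := fun s r => ENNReal.ofReal (fbmKernel a m m' s r)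
  set G : ℝ → ℝ≥0∞ := fun c => ENNReal.ofReal (Gamma (a + 1) * c ^ (-(a + 1)))
  have hsplit : ∀ s ∈ Ioi (0 : ℝ), ∫⁻ r in Ioi 0, K s r
      = (∫⁻ r in Ioc 0 s, K s r) + ENNReal.ofReal (exp (-(m + m') * s)) * G m' := by
    intro s hs
    rw [← Ioc_union_Ioi_eq_Ioi (le_of_lt hs),
      lintegral_union measurableSet_Ioi (Ioc_disjoint_Ioi le_rfl), add_comm m,
      ← lintegral_Ioi_fbmKernel m hm' ha s]
    simp only [K, fbmKernel_comm a m m' s]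
  have hK : Measurable (Function.uncurry K) :=
    ENNReal.measurable_ofReal.comp (measurable_fbmKernel a m m')
  calc ∫⁻ s in Ioi 0, ∫⁻ r in Ioi 0, K s r
      = ∫⁻ s in Ioi 0, (∫⁻ r in Ioc 0 s, K s r) + ENNReal.ofReal (exp (-(m + m') * s)) * G m' :=
        setLIntegral_congr_fun measurableSet_Ioi hsplit
    _ = (∫⁻ r in Ioi 0, ∫⁻ s in Ici r, K s r)
          + ∫⁻ s in Ioi 0, ENNReal.ofReal (exp (-(m + m') * s)) * G m' := by
        rw [lintegral_add_right _ (by fun_prop), lintegral_Ioi_lintegral_Ioc_eq 0 hK]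
    _ = (∫⁻ r in Ioi 0, ENNReal.ofReal (exp (-(m + m') * r)) * G m)
          + ∫⁻ s in Ioi 0, ENNReal.ofReal (exp (-(m + m') * s)) * G m' := by
        congr 1
        refine setLIntegral_congr_fun measurableSet_Ioi fun r _ => ?_
        rw [← setLIntegral_congr Ioi_ae_eq_Ici, lintegral_Ioi_fbmKernel m' hm ha]
    _ = _ := by
        have hΓ : 0 ≤ Gamma (a + 1) := (Gamma_pos_of_pos (by linarith)).le
        rw [lintegral_mul_const' _ _ ENNReal.ofReal_ne_top,
          lintegral_mul_const' _ _ ENNReal.ofReal_ne_top, lintegral_exp_Ioi (by positivity),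
          ← ENNReal.ofReal_mul (by positivity), ← ENNReal.ofReal_mul (by positivity),
          ← ENNReal.ofReal_add (by positivity) (by positivity)]
        congr 1
        ring

lemma integral_integral_eq_toReal_lintegral_lintegral {α β : Type*} [MeasurableSpace α]
    [MeasurableSpace β] {μ : Measure α} {ν : Measure β} [SFinite ν] {f : α → β → ℝ}
    (hf : Measurable (Function.uncurry f)) (hf₀ : ∀ x y, 0 ≤ f x y)
    (hfin : ∫⁻ x, ∫⁻ y, ENNReal.ofReal (f x y) ∂ν ∂μ ≠ ∞) :
    ∫ x, ∫ y, f x y ∂ν ∂μ = (∫⁻ x, ∫⁻ y, ENNReal.ofReal (f x y) ∂ν ∂μ).toReal := by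
  have hinner : ∀ x, ∫ y, f x y ∂ν = (∫⁻ y, ENNReal.ofReal (f x y) ∂ν).toReal := fun x =>
    integral_eq_lintegral_of_nonneg_ae (ae_of_all _ (hf₀ x))
      (hf.comp measurable_prodMk_left).aestronglyMeasurable
  have hmeas : Measurable fun x => ∫⁻ y, ENNReal.ofReal (f x y) ∂ν :=
    (ENNReal.measurable_ofReal.comp hf).lintegral_prod_right'
  simp_rw [hinner]
  exact integral_toReal hmeas.aemeasurable (ae_lt_top hmeas hfin)

lemma integral_integral_fbmKernel {a m m' : ℝ} (hm : 0 < m) (hm' : 0 < m') (ha : -1 < a) :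
    ∫ s in Ioi 0, ∫ r in Ioi 0, fbmKernel a m m' s r
      = Gamma (a + 1) * (m ^ (-(a + 1)) + m' ^ (-(a + 1))) / (m + m') := by
  have hΓ : 0 < Gamma (a + 1) := Gamma_pos_of_pos (by linarith)
  rw [integral_integral_eq_toReal_lintegral_lintegral (measurable_fbmKernel a m m')
      (fbmKernel_nonneg a m m') (by simp [lintegral_lintegral_fbmKernel hm hm' ha]),
    lintegral_lintegral_fbmKernel hm hm' ha, ENNReal.toReal_ofReal (by positivity)]

theorem stmt_0 (H m m' : ℝ) (hH : H ∈ Set.Ioo (1/2 : ℝ) 1) (hm : 0 < m) (hm' : 0 < m') :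
    H * (2*H - 1) *
      ∫ s in Set.Ioi (0:ℝ), ∫ r in Set.Ioi (0:ℝ),
        Real.exp (-m*s) * Real.exp (-m'*r) * |s - r| ^ (2*H - 2)
    = (H * Real.Gamma (2*H) / (m + m')) * (m ^ (1 - 2*H) + m' ^ (1 - 2*H)) := by
  obtain ⟨hH₁, -⟩ := hH
  have hΓ : Gamma (2 * H) = (2 * H - 1) * Gamma (2 * H - 1) := by
    rw [← Gamma_add_one (by linarith), sub_add_cancel]
  have hkernel := integral_integral_fbmKernel hm hm' (a := 2 * H - 2) (by linarith)
  rw [show 2 * H - 2 + 1 = 2 * H - 1 by ring, show -(2 * H - 1) = 1 - 2 * H by ring] at hkernel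
  simp only [fbmKernel] at hkernel
  rw [hkernel, hΓ]
  ring
end

section
/- For H ∈ (1/2, 3/4) and a, b > 0, ∫₀^∞ ∫₀^∞ (e^{-ax} - e^{-bx})(x+w)^{2H-2} w^{2H-2} dx dw = (Γ(2H-1)Γ(3-4H)Γ(4H-2)/Γ(2-2H)) (a^{2-4H} - b^{2-4H}). -/
/-!
With `α = 2H - 1 ∈ (0, 1/2)` and `β = 3 - 4H ∈ (0, 1)` the kernel is
`(x + w) ^ (2H - 2) * w ^ (2H - 2) = w ^ (α - 1) * (x + w) ^ (-(α + β))`. Writing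
`(x + w) ^ (-s) = Γ(s)⁻¹ ∫ ξ ^ (s - 1) e ^ (-ξ (x + w)) dξ` and using Fubini, the `w`-integral
is a Beta integral, `∫ w ^ (α - 1) (x + w) ^ (-(α + β)) dw = B(α, β) x ^ (-β)`. Everything is
nonnegative, so Fubini applies to each exponential `e ^ (-c x)`, `c ∈ {a, b}`, separately, and
`∫ x ^ (-β) e ^ (-c x) dx = Γ(1 - β) c ^ (β - 1)` is a Gamma integral.
-/

open MeasureTheory Real Set

lemma integrableOn_rpow_mul_exp_neg_mul_Ioi {a r : ℝ} (ha : 0 < a) (hr : 0 < r) :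
    IntegrableOn (fun t : ℝ => t ^ (a - 1) * exp (-(r * t))) (Ioi 0) :=
  .of_integral_ne_zero <| by
    rw [integral_rpow_mul_exp_neg_mul_Ioi ha hr]
    exact (mul_pos (rpow_pos_of_pos (by positivity) _) (Gamma_pos_of_pos ha)).ne'

lemma integrable_prod_of_ae_nonneg {α β : Type*} [MeasurableSpace α] [MeasurableSpace β]
    {μ : Measure α} {ν : Measure β} [SFinite μ] [SFinite ν] {f : α × β → ℝ}
    (hf : AEStronglyMeasurable f (μ.prod ν)) (hf₀ : ∀ᵐ y ∂ν, ∀ᵐ x ∂μ, 0 ≤ f (x, y))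
    (hslice : ∀ᵐ y ∂ν, Integrable (fun x => f (x, y)) μ)
    (hint : Integrable (fun y => ∫ x, f (x, y) ∂μ) ν) :
    Integrable f (μ.prod ν) := by
  refine (integrable_prod_iff' hf).2 ⟨hslice, hint.congr ?_⟩
  filter_upwards [hf₀] with y hy
  exact integral_congr_ae (hy.mono fun x hx => (Real.norm_of_nonneg hx).symm)

theorem integral_rpow_mul_one_add_rpow_neg_Ioi {a b : ℝ} (ha : 0 < a) (hb : 0 < b) :
    ∫ t in Ioi (0 : ℝ), t ^ (a - 1) * (1 + t) ^ (-(a + b))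
      = Gamma a * Gamma b / Gamma (a + b) := by
  -- `Gamma s * (1 + t) ^ (-s) = ∫ ξ ^ (s - 1) * exp (-((1 + t) * ξ)) dξ`; integrate in `t` first
  set F : ℝ → ℝ → ℝ := fun t ξ => t ^ (a - 1) * (ξ ^ (a + b - 1) * exp (-((1 + t) * ξ)))
  have hsplit : ∀ t ξ,
      F t ξ = ξ ^ (a + b - 1) * exp (-(1 * ξ)) * (t ^ (a - 1) * exp (-(ξ * t))) := by
    intro t ξ
    simp only [F, add_mul, neg_add, exp_add]
    ring_nf
  have hinner_ξ : ∀ t ∈ Ioi (0 : ℝ), ∫ ξ in Ioi (0 : ℝ), F t ξ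
      = Gamma (a + b) * (t ^ (a - 1) * (1 + t) ^ (-(a + b))) := by
    intro t ht
    have ht : (0 : ℝ) < 1 + t := by linarith [mem_Ioi.1 ht]
    rw [integral_const_mul, integral_rpow_mul_exp_neg_mul_Ioi (by linarith) ht, one_div,
      inv_rpow ht.le, ← rpow_neg ht.le]
    ring
  have hinner_t : ∀ ξ ∈ Ioi (0 : ℝ), ∫ t in Ioi (0 : ℝ), F t ξ
      = Gamma a * (ξ ^ (b - 1) * exp (-(1 * ξ))) := by
    intro ξ hξ
    have hξ : (0 : ℝ) < ξ := hξ
    simp_rw [hsplit]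
    rw [integral_const_mul, integral_rpow_mul_exp_neg_mul_Ioi ha hξ, one_div, inv_rpow hξ.le,
      ← rpow_neg hξ.le]
    have : ξ ^ (a + b - 1) * ξ ^ (-a) = ξ ^ (b - 1) := by
      rw [← rpow_add hξ]; ring_nf
    rw [← this]
    ring
  have hF : Integrable (Function.uncurry F)
      ((volume.restrict (Ioi (0 : ℝ))).prod (volume.restrict (Ioi 0))) := by
    refine integrable_prod_of_ae_nonneg ?_ ?_ ?_ ?_
    · exact (by fun_prop : Measurable (Function.uncurry F)).aestronglyMeasurable
    · filter_upwards [ae_restrict_mem measurableSet_Ioi] with ξ hξ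
      filter_upwards [ae_restrict_mem measurableSet_Ioi] with t ht
      have := mem_Ioi.1 hξ; have := mem_Ioi.1 ht
      simp only [Function.uncurry_apply_pair, F]
      positivity
    · filter_upwards [ae_restrict_mem measurableSet_Ioi] with ξ hξ
      simp only [Function.uncurry_apply_pair, hsplit]
      exact (integrableOn_rpow_mul_exp_neg_mul_Ioi ha hξ).const_mul _
    · refine ((integrableOn_rpow_mul_exp_neg_mul_Ioi hb one_pos).const_mul (Gamma a)).congr ?_
      filter_upwards [ae_restrict_mem measurableSet_Ioi] with ξ hξ
      exact (hinner_t ξ hξ).symm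
  have key : Gamma (a + b) * ∫ t in Ioi (0 : ℝ), t ^ (a - 1) * (1 + t) ^ (-(a + b))
      = Gamma a * Gamma b := by
    rw [← integral_const_mul, ← setIntegral_congr_fun measurableSet_Ioi hinner_ξ,
      integral_integral_swap hF, setIntegral_congr_fun measurableSet_Ioi hinner_t,
      integral_const_mul, integral_rpow_mul_exp_neg_mul_Ioi hb one_pos, div_one, one_rpow,
      one_mul]
  rw [eq_div_iff (Gamma_pos_of_pos (add_pos ha hb)).ne', ← key, mul_comm]

theorem integral_rpow_mul_add_rpow_neg_Ioi {a b x : ℝ} (ha : 0 < a) (hb : 0 < b)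
    (hx : 0 < x) :
    ∫ w in Ioi (0 : ℝ), w ^ (a - 1) * (x + w) ^ (-(a + b))
      = Gamma a * Gamma b / Gamma (a + b) * x ^ (-b) := by
  have hscale := integral_comp_mul_left_Ioi' (fun w => w ^ (a - 1) * (x + w) ^ (-(a + b))) 0 hx
  have hhom : ∀ t ∈ Ioi (0 : ℝ), (x * t) ^ (a - 1) * (x + x * t) ^ (-(a + b))
      = x ^ (-b - 1) * (t ^ (a - 1) * (1 + t) ^ (-(a + b))) := by
    intro t ht
    have ht : (0 : ℝ) < t := ht
    rw [show x + x * t = x * (1 + t) by ring, mul_rpow hx.le ht.le,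
      mul_rpow hx.le (by positivity), show -b - 1 = (a - 1) + -(a + b) by ring, rpow_add hx]
    ring
  rw [mul_zero] at hscale
  rw [← hscale, setIntegral_congr_fun measurableSet_Ioi hhom, integral_const_mul,
    integral_rpow_mul_one_add_rpow_neg_Ioi ha hb, smul_eq_mul, rpow_sub_one hx.ne']
  field_simp

theorem integrableOn_rpow_mul_add_rpow_neg_Ioi {a b x : ℝ} (ha : 0 < a) (hb : 0 < b)
    (hx : 0 < x) :
    IntegrableOn (fun w : ℝ => w ^ (a - 1) * (x + w) ^ (-(a + b))) (Ioi 0) :=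
  .of_integral_ne_zero <| by
    rw [integral_rpow_mul_add_rpow_neg_Ioi ha hb hx]
    have := Gamma_pos_of_pos ha; have := Gamma_pos_of_pos hb
    have := Gamma_pos_of_pos (add_pos ha hb)
    positivity

theorem integrable_exp_neg_mul_rpow_mul_add_rpow_neg {a b c : ℝ} (ha : 0 < a) (hb : 0 < b)
    (hb₁ : b < 1) (hc : 0 < c) :
    Integrable
      (Function.uncurry fun w x : ℝ => exp (-(c * x)) * (w ^ (a - 1) * (x + w) ^ (-(a + b))))
      ((volume.restrict (Ioi (0 : ℝ))).prod (volume.restrict (Ioi 0))) := by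
  refine integrable_prod_of_ae_nonneg ?_ ?_ ?_ ?_
  · exact (by fun_prop : Measurable _).aestronglyMeasurable
  · filter_upwards [ae_restrict_mem measurableSet_Ioi] with x hx
    filter_upwards [ae_restrict_mem measurableSet_Ioi] with w hw
    have := mem_Ioi.1 hx; have := mem_Ioi.1 hw
    simp only [Function.uncurry_apply_pair]
    positivity
  · filter_upwards [ae_restrict_mem measurableSet_Ioi] with x hx
    simp only [Function.uncurry_apply_pair]
    exact (integrableOn_rpow_mul_add_rpow_neg_Ioi ha hb hx).const_mul _
  · refine ((integrableOn_rpow_mul_exp_neg_mul_Ioi (sub_pos.2 hb₁) hc).const_mul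
      (Gamma a * Gamma b / Gamma (a + b))).congr ?_
    filter_upwards [ae_restrict_mem measurableSet_Ioi] with x hx
    simp only [Function.uncurry_apply_pair]
    rw [integral_const_mul, integral_rpow_mul_add_rpow_neg_Ioi ha hb hx, sub_sub_cancel_left]
    ring

theorem integral_integral_exp_neg_mul_rpow_mul_add_rpow_neg {a b c : ℝ} (ha : 0 < a)
    (hb : 0 < b) (hb₁ : b < 1) (hc : 0 < c) :
    ∫ w in Ioi (0 : ℝ), ∫ x in Ioi (0 : ℝ),
        exp (-(c * x)) * (w ^ (a - 1) * (x + w) ^ (-(a + b)))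
      = Gamma a * Gamma b / Gamma (a + b) * Gamma (1 - b) * c ^ (b - 1) := by
  rw [integral_integral_swap (integrable_exp_neg_mul_rpow_mul_add_rpow_neg ha hb hb₁ hc)]
  have hinner : ∀ x ∈ Ioi (0 : ℝ),
      ∫ w in Ioi (0 : ℝ), exp (-(c * x)) * (w ^ (a - 1) * (x + w) ^ (-(a + b)))
      = Gamma a * Gamma b / Gamma (a + b) * (x ^ ((1 - b) - 1) * exp (-(c * x))) := by
    intro x hx
    rw [integral_const_mul, integral_rpow_mul_add_rpow_neg_Ioi ha hb hx, sub_sub_cancel_left]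
    ring
  rw [setIntegral_congr_fun measurableSet_Ioi hinner, integral_const_mul,
    integral_rpow_mul_exp_neg_mul_Ioi (sub_pos.2 hb₁) hc, one_div, inv_rpow hc.le,
    ← rpow_neg hc.le, neg_sub]
  ring

theorem stmt_6_general (H a b : ℝ) (hH : H ∈ Set.Ioo (1/2 : ℝ) (3/4)) (ha : 0 < a) (hb : 0 < b) :
    (∫ w in Set.Ioi (0:ℝ), ∫ x in Set.Ioi (0:ℝ),
        (Real.exp (-a * x) - Real.exp (-b * x)) * (x + w) ^ (2*H - 2) * w ^ (2*H - 2))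
      = (Real.Gamma (2*H - 1) * Real.Gamma (3 - 4*H) * Real.Gamma (4*H - 2)
          / Real.Gamma (2 - 2*H)) * (a ^ (2 - 4*H) - b ^ (2 - 4*H)) := by
  obtain ⟨hH₁, hH₂⟩ := hH
  have hα : 0 < 2 * H - 1 := by linarith
  have hβ : 0 < 3 - 4 * H := by linarith
  have hβ₁ : 3 - 4 * H < 1 := by linarith
  have hkernel : ∀ c x w : ℝ, exp (-c * x) * (x + w) ^ (2 * H - 2) * w ^ (2 * H - 2)
      = exp (-(c * x))
          * (w ^ ((2 * H - 1) - 1) * (x + w) ^ (-((2 * H - 1) + (3 - 4 * H)))) := by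
    intro c x w
    rw [neg_mul, show (2 * H - 1) - 1 = 2 * H - 2 by ring,
      show -((2 * H - 1) + (3 - 4 * H)) = 2 * H - 2 by ring]
    ring
  have hsub := integral_integral_sub
    (integrable_exp_neg_mul_rpow_mul_add_rpow_neg hα hβ hβ₁ ha)
    (integrable_exp_neg_mul_rpow_mul_add_rpow_neg hα hβ hβ₁ hb)
  simp only [Function.uncurry_apply_pair] at hsub
  simp_rw [sub_mul, hkernel]
  rw [hsub, integral_integral_exp_neg_mul_rpow_mul_add_rpow_neg hα hβ hβ₁ ha,
    integral_integral_exp_neg_mul_rpow_mul_add_rpow_neg hα hβ hβ₁ hb,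
    show 2 * H - 1 + (3 - 4 * H) = 2 - 2 * H by ring, show 1 - (3 - 4 * H) = 4 * H - 2 by ring,
    show 3 - 4 * H - 1 = 2 - 4 * H by ring]
  ring

theorem stmt_6 (H a b : ℝ) (hH : H ∈ Set.Ioo (1/2 : ℝ) (3/4)) (ha : 0 < a) (hb : 0 < b)
    (hab : a ≠ b) :
    (∫ w in Set.Ioi (0:ℝ), ∫ x in Set.Ioi (0:ℝ),
        (Real.exp (-a * x) - Real.exp (-b * x)) * (x + w) ^ (2*H - 2) * w ^ (2*H - 2))
      = (Real.Gamma (2*H - 1) * Real.Gamma (3 - 4*H) * Real.Gamma (4*H - 2)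
          / Real.Gamma (2 - 2*H)) * (a ^ (2 - 4*H) - b ^ (2 - 4*H)) :=
  stmt_6_general H a b hH ha hb
end

section
/- Let H ∈ (1/2,1). For every sequence (Δ_n) of positive reals with Δ_n ≤ n^{1/H - ε₂} for some ε₂ > 0, there exists ε > 0 such that for all sufficiently large n, q_n := min( Δ_n^{2H}, (nΔ_n)^{-2} + Δ_n^H/n + n^{-1} Δ_n^{4H-4} Σ_{j=1}^n j^{4H-4} ) ≤ n^{-ε}. -/
/-!
Split according to whether `Δ n ≤ n ^ (-1/4)`. If so, the first entry of the minimum is at most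
`n ^ (-H/2)`. Otherwise each term of the second entry decays polynomially: `(n Δ n)^(-2) ≤ n^(-3/2)`,
`Δ n ^ H / n ≤ n ^ (-ε₂ H)` by the upper bound on `Δ n`, and in the last term
`Δ n ^ (4H-4) ≤ n ^ (1-H)` while `∑ j ^ (4H-4) ≤ ∑ j ^ (2H-2) ≤ n ^ (2H-1) / (2H-1)`,
so that term is at most `n ^ (H-1) / (2H-1)`. The constants are absorbed by halving the exponent.
-/

open Real Filter Finset

lemma mul_rpow_sub_one_le_add_one_rpow_sub_rpow {p x : ℝ} (hp0 : 0 ≤ p) (hp1 : p ≤ 1) (hx : 0 ≤ x) :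
    p * (x + 1) ^ (p - 1) ≤ (x + 1) ^ p - x ^ p := by
  have hy : 0 < x + 1 := by linarith
  have bernoulli := rpow_one_add_le_one_add_mul_self (s := -(x + 1)⁻¹)
    (by rw [neg_le_neg_iff]; exact inv_le_one_of_one_le₀ (by linarith)) hp0 hp1
  have hxy : 1 + -(x + 1)⁻¹ = x / (x + 1) := by field_simp; ring
  rw [hxy, div_rpow hx hy.le, div_le_iff₀ (rpow_pos_of_pos hy p)] at bernoulli
  rw [rpow_sub_one hy.ne']
  have : (1 + p * -(x + 1)⁻¹) * (x + 1) ^ p = (x + 1) ^ p - p * ((x + 1) ^ p / (x + 1)) := by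
    field_simp; ring
  linarith

lemma sum_Icc_rpow_sub_one_le {p : ℝ} (hp0 : 0 < p) (hp1 : p ≤ 1) (n : ℕ) :
    ∑ j ∈ Icc 1 n, (j : ℝ) ^ (p - 1) ≤ (n : ℝ) ^ p / p := by
  induction n with
  | zero => simp [zero_rpow hp0.ne']
  | succ n ih =>
    rw [sum_Icc_succ_top (by omega), Nat.cast_succ]
    have := mul_rpow_sub_one_le_add_one_rpow_sub_rpow hp0.le hp1 (Nat.cast_nonneg (α := ℝ) n)
    rw [le_div_iff₀ hp0] at ih ⊢
    linarith

lemma eventually_le_rpow_neg_half_of_le_mul_rpow_neg {f : ℕ → ℝ} {C γ : ℝ} (hγ : 0 < γ)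
    (hf : ∀ᶠ n : ℕ in atTop, f n ≤ C * (n : ℝ) ^ (-γ)) :
    ∀ᶠ n : ℕ in atTop, f n ≤ (n : ℝ) ^ (-(γ / 2)) := by
  have htend : Tendsto (fun n : ℕ => (n : ℝ) ^ (γ / 2)) atTop atTop :=
    (tendsto_rpow_atTop (by positivity)).comp tendsto_natCast_atTop_atTop
  filter_upwards [hf, htend.eventually_ge_atTop C, eventually_gt_atTop 0] with n hfn hCn hn
  have hn : (0 : ℝ) < n := by exact_mod_cast hn
  calc f n ≤ C * (n : ℝ) ^ (-γ) := hfn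
    _ ≤ (n : ℝ) ^ (γ / 2) * (n : ℝ) ^ (-γ) := by gcongr
    _ = (n : ℝ) ^ (-(γ / 2)) := by rw [← rpow_add hn]; ring_nf

section
variable {n : ℕ} {d : ℝ}

lemma rpow_le_rpow_neg_of_le_rpow_neg_quarter {H : ℝ} (hH : 0 < H) (hd : 0 ≤ d)
    (hdn : d ≤ (n : ℝ) ^ (-(1 / 4 : ℝ))) : d ^ (2 * H) ≤ (n : ℝ) ^ (-(H / 2)) := by
  calc d ^ (2 * H) ≤ ((n : ℝ) ^ (-(1 / 4 : ℝ))) ^ (2 * H) := by gcongr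
    _ = (n : ℝ) ^ (-(H / 2)) := by rw [← rpow_mul n.cast_nonneg]; ring_nf

lemma mul_rpow_neg_two_le (hn : 1 ≤ n) (hdn : (n : ℝ) ^ (-(1 / 4 : ℝ)) ≤ d) :
    ((n : ℝ) * d) ^ (-2 : ℝ) ≤ (n : ℝ) ^ (-(3 / 2 : ℝ)) := by
  have hn0 : (0 : ℝ) < n := by exact_mod_cast hn
  calc ((n : ℝ) * d) ^ (-2 : ℝ) ≤ ((n : ℝ) * (n : ℝ) ^ (-(1 / 4 : ℝ))) ^ (-2 : ℝ) :=
        rpow_le_rpow_of_nonpos (by positivity) (by gcongr) (by norm_num)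
    _ = (n : ℝ) ^ (-(3 / 2 : ℝ)) := by
        rw [← rpow_one_add' hn0.le (by norm_num), ← rpow_mul hn0.le]; norm_num

lemma rpow_div_le_of_le_rpow {H ε₂ : ℝ} (hH : 0 < H) (hn : 1 ≤ n) (hd : 0 ≤ d)
    (hdn : d ≤ (n : ℝ) ^ (1 / H - ε₂)) : d ^ H / n ≤ (n : ℝ) ^ (-(ε₂ * H)) := by
  have hn0 : (0 : ℝ) < n := by exact_mod_cast hn
  calc d ^ H / n ≤ ((n : ℝ) ^ (1 / H - ε₂)) ^ H / n := by gcongr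
    _ = (n : ℝ) ^ (-(ε₂ * H)) := by
        rw [← rpow_mul hn0.le, ← rpow_sub_one hn0.ne']; congr 1; field_simp; ring

lemma inv_mul_rpow_mul_sum_le {H : ℝ} (hH1 : 1 / 2 < H) (hH2 : H < 1) (hn : 1 ≤ n)
    (hdn : (n : ℝ) ^ (-(1 / 4 : ℝ)) ≤ d) :
    1 / (n : ℝ) * d ^ (4 * H - 4) * ∑ j ∈ Icc 1 n, (j : ℝ) ^ (4 * H - 4)
      ≤ (n : ℝ) ^ (-(1 - H)) / (2 * H - 1) := by
  have hn0 : (0 : ℝ) < n := by exact_mod_cast hn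
  have hpow : d ^ (4 * H - 4) ≤ (n : ℝ) ^ (1 - H) := by
    calc d ^ (4 * H - 4) ≤ ((n : ℝ) ^ (-(1 / 4 : ℝ))) ^ (4 * H - 4) :=
          rpow_le_rpow_of_nonpos (by positivity) hdn (by linarith)
      _ = (n : ℝ) ^ (1 - H) := by rw [← rpow_mul hn0.le]; ring_nf
  have hsum : ∑ j ∈ Icc 1 n, (j : ℝ) ^ (4 * H - 4) ≤ (n : ℝ) ^ (2 * H - 1) / (2 * H - 1) := by
    calc ∑ j ∈ Icc 1 n, (j : ℝ) ^ (4 * H - 4) ≤ ∑ j ∈ Icc 1 n, (j : ℝ) ^ (2 * H - 1 - 1) := by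
          refine sum_le_sum fun j hj => rpow_le_rpow_of_exponent_le ?_ (by linarith)
          exact_mod_cast (mem_Icc.mp hj).1
      _ ≤ (n : ℝ) ^ (2 * H - 1) / (2 * H - 1) :=
          sum_Icc_rpow_sub_one_le (by linarith) (by linarith) n
  calc 1 / (n : ℝ) * d ^ (4 * H - 4) * ∑ j ∈ Icc 1 n, (j : ℝ) ^ (4 * H - 4)
      ≤ 1 / (n : ℝ) * (n : ℝ) ^ (1 - H) * ((n : ℝ) ^ (2 * H - 1) / (2 * H - 1)) := by
        gcongr
    _ = (n : ℝ) ^ (-(1 - H)) / (2 * H - 1) := by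
        rw [one_div, ← rpow_neg_one, ← rpow_add hn0, mul_div_assoc', ← rpow_add hn0]; ring_nf

lemma min_le_mul_rpow_neg {H ε₂ : ℝ} (hH1 : 1 / 2 < H) (hH2 : H < 1) (hn : 1 ≤ n) (hd : 0 ≤ d)
    (hdn : d ≤ (n : ℝ) ^ (1 / H - ε₂)) :
    min (d ^ (2 * H))
        (((n : ℝ) * d) ^ (-2 : ℝ) + d ^ H / (n : ℝ)
          + 1 / (n : ℝ) * d ^ (4 * H - 4) * ∑ j ∈ Icc 1 n, (j : ℝ) ^ (4 * H - 4))
      ≤ (2 + 1 / (2 * H - 1)) * (n : ℝ) ^ (-min (H / 2) (min (ε₂ * H) (1 - H))) := by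
  set γ := min (H / 2) (min (ε₂ * H) (1 - H))
  have hγH : γ ≤ H / 2 := min_le_left _ _
  have hγε₂ : γ ≤ ε₂ * H := (min_le_right _ _).trans (min_le_left _ _)
  have hγ1 : γ ≤ 1 - H := (min_le_right _ _).trans (min_le_right _ _)
  have mono : ∀ s, γ ≤ s → (n : ℝ) ^ (-s) ≤ (n : ℝ) ^ (-γ) := fun s hs =>
    rpow_le_rpow_of_exponent_le (by exact_mod_cast hn) (by linarith)
  have hC : 0 ≤ 1 / (2 * H - 1) := by rw [one_div_nonneg]; linarith
  rcases le_or_gt d ((n : ℝ) ^ (-(1 / 4 : ℝ))) with hsmall | hlarge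
  · calc _ ≤ d ^ (2 * H) := min_le_left _ _
      _ ≤ (n : ℝ) ^ (-(H / 2)) := rpow_le_rpow_neg_of_le_rpow_neg_quarter (by linarith) hd hsmall
      _ ≤ (n : ℝ) ^ (-γ) := mono _ hγH
      _ ≤ _ := le_mul_of_one_le_left (by positivity) (by linarith)
  · have h1 := (mul_rpow_neg_two_le hn hlarge.le).trans (mono _ (by linarith))
    have h2 := (rpow_div_le_of_le_rpow (by linarith) hn hd hdn).trans (mono _ hγε₂)
    have h3 := (inv_mul_rpow_mul_sum_le hH1 hH2 hn hlarge.le).trans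
      (div_le_div_of_nonneg_right (mono _ hγ1) (by linarith))
    have hsplit : (2 + 1 / (2 * H - 1)) * (n : ℝ) ^ (-γ)
        = (n : ℝ) ^ (-γ) + (n : ℝ) ^ (-γ) + (n : ℝ) ^ (-γ) / (2 * H - 1) := by ring
    exact (min_le_right _ _).trans (by linarith)
end

theorem stmt_8 (H : ℝ) (hH : H ∈ Set.Ioo (1/2 : ℝ) 1) (Δ : ℕ → ℝ)
    (hΔpos : ∀ n : ℕ, 1 ≤ n → 0 < Δ n)
    (hΔ : ∃ ε₂ : ℝ, 0 < ε₂ ∧ ∀ n : ℕ, 1 ≤ n → Δ n ≤ (n : ℝ) ^ (1/H - ε₂)) :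
    ∃ ε : ℝ, 0 < ε ∧ ∀ᶠ n : ℕ in atTop,
      min ((Δ n) ^ (2*H))
        (((n : ℝ) * Δ n) ^ (-2 : ℝ) + (Δ n) ^ H / (n : ℝ)
          + (1 / (n : ℝ)) * (Δ n) ^ (4*H - 4) * ∑ j ∈ Finset.Icc 1 n, (j : ℝ) ^ (4*H - 4))
        ≤ (n : ℝ) ^ (-ε) := by
  obtain ⟨hH1, hH2⟩ := hH
  obtain ⟨ε₂, hε₂, hΔle⟩ := hΔ
  have hγ : 0 < min (H / 2) (min (ε₂ * H) (1 - H)) :=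
    lt_min (by linarith) (lt_min (by positivity) (by linarith))
  refine ⟨_, half_pos hγ,
    eventually_le_rpow_neg_half_of_le_mul_rpow_neg (C := 2 + 1 / (2 * H - 1)) hγ ?_⟩
  filter_upwards [eventually_ge_atTop 1] with n hn
  exact min_le_mul_rpow_neg hH1 hH2 hn (hΔpos n hn).le (hΔle n hn)
end

section
/- Define F : (0,∞)² → ℝ² by F(x,y) = HΓ(2H)·( (y^{2-2H} - x^{2-2H})/(y² - x²), (x^{-2H} - y^{-2H})/(y² - x²) ) for x ≠ y, and F(x,x) = HΓ(2H)·((1-H)x^{-2H}, H x^{-2H-2}). Then for H ∈ (1/2,1), the Jacobian determinant of F is nonzero at every point (x,y) ∈ (0,∞)² with x ≠ y. -/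
/-!
Off the diagonal, both components of `F` are multiples of the quotients
`(y^α - x^α) / (y² - x²)` with `α = 2 - 2H` and `α = -2H`. With `P = x^{-2H}` and `Q = y^{-2H}`,
a direct computation gives
`det J_F = -4 (HΓ(2H))² (H² P Q (y² - x²)² - x² y² (P - Q)²) / (x y (y² - x²)³)`.
Writing `y / x = e^s`, the bracket is a positive multiple of `H² sinh² s - sinh² (H s)`, which is
positive for `s ≠ 0` because `sinh` is strictly convex on `[0, ∞)` and vanishes at `0`.
-/

open Real

/-- The moment map `F` from the paper: `F(x,y) = HΓ(2H)·((y^{2-2H}-x^{2-2H})/(y²-x²),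
(x^{-2H}-y^{-2H})/(y²-x²))` for `x ≠ y`, extended to the diagonal. -/
noncomputable def Fmap (H : ℝ) (p : ℝ × ℝ) : ℝ × ℝ :=
  if p.1 = p.2 then
    (H * Real.Gamma (2*H) * ((1 - H) * p.1 ^ (-(2*H))),
     H * Real.Gamma (2*H) * (H * p.1 ^ (-(2*H) - 2)))
  else
    (H * Real.Gamma (2*H) * (p.2 ^ (2 - 2*H) - p.1 ^ (2 - 2*H)) / (p.2 ^ 2 - p.1 ^ 2),
     H * Real.Gamma (2*H) * (p.1 ^ (-(2*H)) - p.2 ^ (-(2*H))) / (p.2 ^ 2 - p.1 ^ 2))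

open Set Topology

theorem strictConvexOn_sinh : StrictConvexOn ℝ (Ici 0) sinh := by
  refine strictConvexOn_of_deriv2_pos (convex_Ici 0) continuous_sinh.continuousOn fun x hx => ?_
  rw [interior_Ici] at hx
  simpa [Real.deriv_sinh, Real.deriv_cosh] using hx

theorem sinh_mul_lt_mul_sinh {a s : ℝ} (ha₀ : 0 < a) (ha₁ : a < 1) (hs : 0 < s) :
    sinh (a * s) < a * sinh s := by
  simpa using strictConvexOn_sinh.2 (mem_Ici.2 hs.le) self_mem_Ici hs.ne' ha₀ (sub_pos.2 ha₁)
    (add_sub_cancel a 1)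

theorem sinh_mul_sq_lt_sq_mul_sinh_sq {a s : ℝ} (ha₀ : 0 < a) (ha₁ : a < 1) (hs : s ≠ 0) :
    sinh (a * s) ^ 2 < a ^ 2 * sinh s ^ 2 := by
  wlog hs' : 0 < s generalizing s
  · simpa using this (neg_ne_zero.2 hs) (neg_pos.2 (lt_of_le_of_ne (not_lt.1 hs') hs))
  rw [← mul_pow]
  exact pow_lt_pow_left₀ (sinh_mul_lt_mul_sinh ha₀ ha₁ hs') (sinh_pos_iff.2 (mul_pos ha₀ hs')).le
    two_ne_zero

theorem rpow_sub_rpow_neg_sq_lt {a r : ℝ} (ha₀ : 0 < a) (ha₁ : a < 1) (hr : 0 < r) (hr₁ : r ≠ 1) :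
    (r ^ a - r ^ (-a)) ^ 2 < a ^ 2 * (r - r⁻¹) ^ 2 := by
  obtain ⟨s, rfl⟩ : ∃ s, exp s = r := ⟨log r, exp_log hr⟩
  have hs : s ≠ 0 := by rintro rfl; simp at hr₁
  have h := sinh_mul_sq_lt_sq_mul_sinh_sq ha₀ ha₁ hs
  rw [sinh_eq, sinh_eq] at h
  rw [← exp_neg, ← exp_mul, ← exp_mul, mul_neg, mul_comm s a]
  linarith

theorem sq_mul_sq_mul_rpow_sub_sq_lt {H x y : ℝ} (hH₀ : 0 < H) (hH₁ : H < 1) (hx : 0 < x)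
    (hy : 0 < y) (hxy : x ≠ y) :
    x ^ 2 * y ^ 2 * (x ^ (-(2 * H)) - y ^ (-(2 * H))) ^ 2
      < H ^ 2 * (x ^ (-(2 * H)) * y ^ (-(2 * H))) * (y ^ 2 - x ^ 2) ^ 2 := by
  have hpow : ∀ z : ℝ, 0 < z → z ^ (-(2 * H)) = ((z ^ H) ^ 2)⁻¹ := fun z hz => by
    rw [rpow_neg hz.le, mul_comm, rpow_mul hz.le, rpow_two]
  have h := rpow_sub_rpow_neg_sq_lt hH₀ hH₁ (div_pos hy hx) (by
    rwa [Ne, div_eq_one_iff_eq hx.ne', eq_comm])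
  rw [div_rpow hy.le hx.le, rpow_neg (div_pos hy hx).le, div_rpow hy.le hx.le, inv_div,
    inv_div] at h
  rw [hpow x hx, hpow y hy]
  have hp : 0 < x ^ H := rpow_pos_of_pos hx H
  have hq : 0 < y ^ H := rpow_pos_of_pos hy H
  set p := x ^ H
  set q := y ^ H
  calc x ^ 2 * y ^ 2 * ((p ^ 2)⁻¹ - (q ^ 2)⁻¹) ^ 2
      = (q / p - p / q) ^ 2 * (x ^ 2 * y ^ 2 / (p ^ 2 * q ^ 2)) := by field_simp
    _ < H ^ 2 * (y / x - x / y) ^ 2 * (x ^ 2 * y ^ 2 / (p ^ 2 * q ^ 2)) :=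
        mul_lt_mul_of_pos_right h (by positivity)
    _ = H ^ 2 * ((p ^ 2)⁻¹ * (q ^ 2)⁻¹) * (y ^ 2 - x ^ 2) ^ 2 := by field_simp

theorem LinearMap.det_prod_eq {R : Type*} [CommRing R] (f : (R × R) →ₗ[R] R × R) :
    LinearMap.det f = (f (1, 0)).1 * (f (0, 1)).2 - (f (0, 1)).1 * (f (1, 0)).2 := by
  rw [← LinearMap.det_toMatrix (Module.Basis.finTwoProd R), Matrix.det_fin_two]
  simp [LinearMap.toMatrix_apply]

theorem det_fderiv_eq_of_hasDerivAt {𝕜 : Type*} [NontriviallyNormedField 𝕜]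
    {f : 𝕜 × 𝕜 → 𝕜 × 𝕜} {x y : 𝕜} {u v : 𝕜 × 𝕜} (hf : DifferentiableAt 𝕜 f (x, y))
    (hu : HasDerivAt (fun t => f (t, y)) u x) (hv : HasDerivAt (fun t => f (x, t)) v y) :
    LinearMap.det (fderiv 𝕜 f (x, y) : (𝕜 × 𝕜) →ₗ[𝕜] 𝕜 × 𝕜) = u.1 * v.2 - v.1 * u.2 := by
  have hu' : fderiv 𝕜 f (x, y) (1, 0) = u :=
    (hf.hasFDerivAt.comp_hasDerivAt x ((hasDerivAt_id x).prodMk (hasDerivAt_const x y))).unique hu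
  have hv' : fderiv 𝕜 f (x, y) (0, 1) = v :=
    (hf.hasFDerivAt.comp_hasDerivAt y ((hasDerivAt_const y x).prodMk (hasDerivAt_id y))).unique hv
  rw [LinearMap.det_prod_eq, ContinuousLinearMap.coe_coe, hu', hv']

noncomputable def rpowDiffQuot (α s t : ℝ) : ℝ := (t ^ α - s ^ α) / (t ^ 2 - s ^ 2)

noncomputable def rpowDiffQuotDeriv (α s t : ℝ) : ℝ :=
  (α * t ^ (α - 1) * (t ^ 2 - s ^ 2) - (t ^ α - s ^ α) * (2 * t)) / (t ^ 2 - s ^ 2) ^ 2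

theorem rpowDiffQuot_comm (α s t : ℝ) : rpowDiffQuot α s t = rpowDiffQuot α t s := by
  rw [rpowDiffQuot, rpowDiffQuot, ← neg_div_neg_eq, neg_sub, neg_sub]

theorem hasDerivAt_rpowDiffQuot {α s t : ℝ} (ht : t ≠ 0) (hst : t ^ 2 ≠ s ^ 2) :
    HasDerivAt (rpowDiffQuot α s) (rpowDiffQuotDeriv α s t) t := by
  have hnum := (hasDerivAt_rpow_const (p := α) (Or.inl ht)).sub_const (s ^ α)
  have hden := (hasDerivAt_pow 2 t).sub_const (s ^ 2)
  exact (hnum.div hden (sub_ne_zero.2 hst)).congr_deriv (by rw [rpowDiffQuotDeriv]; norm_num)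

noncomputable def rpowDiffQuotMap (α β a b : ℝ) (p : ℝ × ℝ) : ℝ × ℝ :=
  (a * rpowDiffQuot α p.1 p.2, b * rpowDiffQuot β p.1 p.2)

theorem differentiableAt_rpowDiffQuotMap {α β a b x y : ℝ} (hx : x ≠ 0) (hy : y ≠ 0)
    (hxy : y ^ 2 ≠ x ^ 2) : DifferentiableAt ℝ (rpowDiffQuotMap α β a b) (x, y) := by
  unfold rpowDiffQuotMap rpowDiffQuot
  fun_prop (disch := simp [sub_ne_zero.2 hxy])

theorem det_fderiv_rpowDiffQuotMap {α β a b x y : ℝ} (hx : x ≠ 0) (hy : y ≠ 0)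
    (hxy : y ^ 2 ≠ x ^ 2) :
    LinearMap.det (fderiv ℝ (rpowDiffQuotMap α β a b) (x, y) : (ℝ × ℝ) →ₗ[ℝ] ℝ × ℝ)
      = a * b * (rpowDiffQuotDeriv α y x * rpowDiffQuotDeriv β x y
          - rpowDiffQuotDeriv α x y * rpowDiffQuotDeriv β y x) := by
  have hu : HasDerivAt (fun t => rpowDiffQuotMap α β a b (t, y))
      (a * rpowDiffQuotDeriv α y x, b * rpowDiffQuotDeriv β y x) x := by
    simp only [rpowDiffQuotMap, rpowDiffQuot_comm _ _ y]
    exact ((hasDerivAt_rpowDiffQuot hx hxy.symm).const_mul a).prodMk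
      ((hasDerivAt_rpowDiffQuot hx hxy.symm).const_mul b)
  have hv : HasDerivAt (fun t => rpowDiffQuotMap α β a b (x, t))
      (a * rpowDiffQuotDeriv α x y, b * rpowDiffQuotDeriv β x y) y :=
    ((hasDerivAt_rpowDiffQuot hy hxy).const_mul a).prodMk
      ((hasDerivAt_rpowDiffQuot hy hxy).const_mul b)
  rw [det_fderiv_eq_of_hasDerivAt (differentiableAt_rpowDiffQuotMap hx hy hxy) hu hv]
  ring

theorem rpowDiffQuotDeriv_det_eq {H x y : ℝ} (hx : 0 < x) (hy : 0 < y) (hxy : y ^ 2 ≠ x ^ 2) :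
    rpowDiffQuotDeriv (2 - 2 * H) y x * rpowDiffQuotDeriv (-(2 * H)) x y
        - rpowDiffQuotDeriv (2 - 2 * H) x y * rpowDiffQuotDeriv (-(2 * H)) y x
      = 4 / (x * y * (y ^ 2 - x ^ 2) ^ 3) * (H ^ 2 * (x ^ (-(2 * H)) * y ^ (-(2 * H)))
          * (y ^ 2 - x ^ 2) ^ 2 - x ^ 2 * y ^ 2 * (x ^ (-(2 * H)) - y ^ (-(2 * H))) ^ 2) := by
  have hα : ∀ z : ℝ, 0 < z → z ^ (2 - 2 * H) = z ^ 2 * z ^ (-(2 * H)) := fun z hz => by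
    rw [show 2 - 2 * H = (2 : ℝ) + -(2 * H) by ring, rpow_add hz, rpow_two]
  have hα₁ : ∀ z : ℝ, 0 < z → z ^ (2 - 2 * H - 1) = z * z ^ (-(2 * H)) := fun z hz => by
    rw [show 2 - 2 * H - 1 = (1 : ℝ) + -(2 * H) by ring, rpow_add hz, rpow_one]
  have hβ₁ : ∀ z : ℝ, 0 < z → z ^ (-(2 * H) - 1) = z ^ (-(2 * H)) * z⁻¹ := fun z hz => by
    rw [sub_eq_add_neg, rpow_add hz, rpow_neg_one]
  have hD : y ^ 2 - x ^ 2 ≠ 0 := sub_ne_zero.2 hxy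
  simp only [rpowDiffQuotDeriv, hα x hx, hα y hy, hα₁ x hx, hα₁ y hy, hβ₁ x hx, hβ₁ y hy]
  field_simp
  ring

theorem Fmap_eventuallyEq_rpowDiffQuotMap (H : ℝ) {x y : ℝ} (hxy : x ≠ y) :
    Fmap H =ᶠ[𝓝 (x, y)]
      rpowDiffQuotMap (2 - 2 * H) (-(2 * H)) (H * Gamma (2 * H)) (-(H * Gamma (2 * H))) := by
  filter_upwards [isClosed_eq continuous_fst continuous_snd |>.isOpen_compl.mem_nhds hxy]
    with p hp
  simp only [Fmap, if_neg (show p.1 ≠ p.2 from hp), rpowDiffQuotMap, rpowDiffQuot]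
  ext <;> ring

theorem stmt_10 (H : ℝ) (hH : H ∈ Set.Ioo (1/2 : ℝ) 1) (x y : ℝ)
    (hx : 0 < x) (hy : 0 < y) (hxy : x ≠ y) :
    DifferentiableAt ℝ (Fmap H) (x, y) ∧
    LinearMap.det ((fderiv ℝ (Fmap H) (x, y)) : (ℝ × ℝ) →ₗ[ℝ] (ℝ × ℝ)) ≠ 0 := by
  obtain ⟨hH₀, hH₁⟩ := hH
  have hc : H * Gamma (2 * H) ≠ 0 := (mul_pos (by linarith) (Gamma_pos_of_pos (by linarith))).ne'
  have hD : y ^ 2 ≠ x ^ 2 := fun h => hxy ((pow_left_inj₀ hy.le hx.le two_ne_zero).1 h).symm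
  have hFG := Fmap_eventuallyEq_rpowDiffQuotMap H hxy
  refine ⟨(differentiableAt_rpowDiffQuotMap hx.ne' hy.ne' hD).congr_of_eventuallyEq hFG, ?_⟩
  rw [hFG.fderiv_eq, det_fderiv_rpowDiffQuotMap hx.ne' hy.ne' hD,
    rpowDiffQuotDeriv_det_eq hx hy hD]
  have hbracket := sub_pos.2 (sq_mul_sq_mul_rpow_sub_sq_lt (by linarith) hH₁ hx hy hxy)
  have hD3 : (y ^ 2 - x ^ 2) ^ 3 ≠ 0 := pow_ne_zero 3 (sub_ne_zero.2 hD)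
  exact mul_ne_zero (mul_ne_zero hc (neg_ne_zero.2 hc)) (mul_ne_zero (by positivity) hbracket.ne')
end
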